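/- Every closed walk in H(d,q) (q ≥ 3) based at the all-zeros vertex is ×-homotopic rel endpoints to a finite concatenation of ground walks U_1, ..., U_d and their inverses; i.e., the ground walks generate the fundamental group Π(H(d,q)). -/

import Mathlib

/-- The Hamming graph `H(d,q)`: vertices are functions `Fin d → Fin q`,
adjacent iff they differ in exactly one coordinate. -/
def hammingGraph (d q : ℕ) : SimpleGraph (Fin d → Fin q) where
  Adj v w := ∃! i, v i ≠ w i
  symm := by
    constructor
    rintro v w ⟨i, hi, hu⟩
    exact ⟨i, hi.symm, fun j hj => hu j hj.symm⟩
  loopless := by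
    constructor
    rintro v ⟨i, hi, -⟩
    exact hi rfl

/-- `l` is (the list of vertices of) a walk in `G` from `a` to `b`. -/
def IsWalkOn {V : Type*} (G : SimpleGraph V) (a b : V) (l : List V) : Prop :=
  l.Chain' G.Adj ∧ l.head? = some a ∧ l.getLast? = some b

/-- Elementary moves on walks: prunes (and their inverses, anti-prunes,
via symmetry) and spider moves. -/
inductive Move {V : Type*} (G : SimpleGraph V) : List V → List V → Prop
  | prune (xs ys : List V) (u v : V) (huv : G.Adj u v) :
      Move G (xs ++ u :: v :: u :: ys) (xs ++ u :: ys)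
  | spider (xs ys : List V) (u v v' w : V) (hne : v ≠ v')
      (h1 : G.Adj u v') (h2 : G.Adj v' w) :
      Move G (xs ++ u :: v :: w :: ys) (xs ++ u :: v' :: w :: ys)

/-- ×-homotopy rel endpoints: the equivalence relation generated by prunes,
anti-prunes and spider moves. -/
def Homotopic {V : Type*} (G : SimpleGraph V) : List V → List V → Prop :=
  Relation.EqvGen (Move G)

/-- Concatenation of walks sharing an endpoint. -/
def wcat {V : Type*} (l1 l2 : List V) : List V := l1 ++ l2.tail

/-- Concatenation of a list of closed walks based at `z`. -/
def wprod {V : Type*} (z : V) (ws : List (List V)) : List V := ws.foldr wcat [z]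

/-- `u` and `v` differ exactly in coordinate `i`. -/
def DiffAt {d q : ℕ} (u v : Fin d → Fin q) (i : Fin d) : Prop :=
  u i ≠ v i ∧ ∀ j, j ≠ i → u j = v j

/-- A ground walk in coordinate `i`: a closed 3-walk at the all-zeros vertex
whose intermediate vertices are nonzero only in coordinate `i`. -/
def IsGroundWalk (d q : ℕ) [NeZero q] (i : Fin d) (l : List (Fin d → Fin q)) : Prop :=
  ∃ a b : Fin q, a ≠ 0 ∧ b ≠ 0 ∧ a ≠ b ∧
    l = [(0 : Fin d → Fin q), Function.update (0 : Fin d → Fin q) i a,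
      Function.update (0 : Fin d → Fin q) i b, 0]

/-- Number of steps of a walk in which coordinate `i` changes. -/
def changeCount {d q : ℕ} (i : Fin d) : List (Fin d → Fin q) → ℕ
  | x :: y :: rest => (if x i = y i then 0 else 1) + changeCount i (y :: rest)
  | _ => 0

/-
Let a closed walk at `0` start with a step `0 → v` in coordinate `i`. Since the walk returns to `0`,
a later step changes coordinate `i` again. Every step before it changes another coordinate `j`, and
consecutive steps in coordinates `j ≠ i` and `i` span a square of the Hamming graph, so a spider
move swaps them. Moving that step forward in this way gives a homotopic walk `0 → v → w → ⋯` of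
the same length with `v` and `w` supported on coordinate `i` alone. If `w = 0` the walk begins
with a prune; otherwise inserting the backtrack `w → 0 → w` splits off the ground walk
`0 → v → w → 0`. Either way a shorter closed walk remains, and induction on the length concludes.
-/

namespace Move

variable {V : Type*} {G : SimpleGraph V}

theorem append_left (p : List V) {l₁ l₂ : List V} (h : Move G l₁ l₂) :
    Move G (p ++ l₁) (p ++ l₂) := by
  cases h with
  | prune xs ys u v huv =>
    simpa only [List.append_assoc] using Move.prune (p ++ xs) ys u v huv
  | spider xs ys u v v' w hne h₁ h₂ =>
    simpa only [List.append_assoc] using Move.spider (p ++ xs) ys u v v' w hne h₁ h₂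

end Move

theorem Homotopic.append_left {V : Type*} {G : SimpleGraph V} (p : List V) {l₁ l₂ : List V}
    (h : Homotopic G l₁ l₂) : Homotopic G (p ++ l₁) (p ++ l₂) := by
  induction h with
  | rel _ _ h => exact .rel _ _ (h.append_left p)
  | refl => exact .refl _
  | symm _ _ _ ih => exact .symm _ _ ih
  | trans _ _ _ _ _ ih₁ ih₂ => exact .trans _ _ _ ih₁ ih₂

namespace IsWalkOn

variable {V : Type*} {G : SimpleGraph V} {a b z : V} {l : List V}

theorem adj (hw : IsWalkOn G a z (a :: b :: l)) : G.Adj a b :=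
  (List.isChain_cons_cons.mp hw.1).1

theorem of_cons (hw : IsWalkOn G a z (a :: b :: l)) : IsWalkOn G b z (b :: l) :=
  ⟨(List.isChain_cons_cons.mp hw.1).2, rfl, by simpa only [List.getLast?_cons_cons] using hw.2.2⟩

theorem cons (h : G.Adj a b) (hw : IsWalkOn G b z (b :: l)) : IsWalkOn G a z (a :: b :: l) :=
  ⟨List.isChain_cons_cons.mpr ⟨h, hw.1⟩, rfl,
    by simpa only [List.getLast?_cons_cons] using hw.2.2⟩

end IsWalkOn

theorem wcat_append_singleton {V : Type*} {z : V} (l : List V) {m : List V}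
    (hm : m.head? = some z) : wcat (l ++ [z]) m = l ++ m := by
  obtain ⟨t, rfl⟩ : ∃ t, m = z :: t := List.head?_eq_some_iff.mp hm
  simp [wcat]

theorem head?_wprod {V : Type*} {z : V} {ws : List (List V)}
    (hws : ∀ w ∈ ws, w.head? = some z) : (wprod z ws).head? = some z := by
  cases ws with
  | nil => rfl
  | cons w ws =>
    obtain ⟨t, ht⟩ := List.head?_eq_some_iff.mp (hws w List.mem_cons_self)
    simp [wprod, wcat, ht]

section Hamming

variable {d q : ℕ} {x y : Fin d → Fin q} {i : Fin d}

open Function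

theorem hammingGraph_adj_update {c : Fin q} (hc : c ≠ x i) :
    (hammingGraph d q).Adj x (update x i c) := by
  refine ⟨i, by simpa using hc.symm, fun j hj => ?_⟩
  by_contra hji
  exact hj (by rw [update_of_ne hji])

theorem eq_update_of_hammingGraph_adj (h : (hammingGraph d q).Adj x y) (hi : x i ≠ y i) :
    y = update x i (y i) := by
  funext j
  by_cases hji : j = i
  · subst hji
    simp
  · rw [update_of_ne hji]
    by_contra hxy
    exact hji (h.unique (Ne.symm hxy) hi)

theorem hammingGraph_adj_update_update (h : (hammingGraph d q).Adj x y) (hi : x i = y i)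
    (c : Fin q) : (hammingGraph d q).Adj (update x i c) (update y i c) := by
  have hne : ∀ j, update x i c j ≠ update y i c j ↔ x j ≠ y j := fun j => by
    by_cases hji : j = i
    · subst hji
      simpa using hi
    · simp [update_of_ne hji]
  exact (existsUnique_congr hne).mpr h

theorem IsWalkOn.exists_homotopic_update_cons {u z : Fin d → Fin q} {r : List (Fin d → Fin q)}
    (hw : IsWalkOn (hammingGraph d q) u z (u :: r)) (hz : z i ≠ u i) :
    ∃ c r', c ≠ u i ∧ r'.length + 1 = r.length ∧
      IsWalkOn (hammingGraph d q) u z (u :: update u i c :: r') ∧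
      Homotopic (hammingGraph d q) (u :: r) (u :: update u i c :: r') := by
  induction r generalizing u with
  | nil =>
    obtain rfl : u = z := by simpa using hw.2.2
    exact absurd rfl hz
  | cons y r ih =>
    have huy := hw.adj
    by_cases hy : u i = y i
    · obtain ⟨c, r', hc, hlen, hw', hhom⟩ := ih hw.of_cons (hy ▸ hz)
      have hc' : c ≠ u i := hy ▸ hc
      have hspider : Move (hammingGraph d q) (u :: y :: update y i c :: r')
          (u :: update u i c :: update y i c :: r') :=
        .spider [] r' u y (update u i c) (update y i c)
          (fun h => hc (by simpa using congrArg (· i) h.symm))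
          (hammingGraph_adj_update hc') (hammingGraph_adj_update_update huy hy c)
      refine ⟨c, update y i c :: r', hc', by simpa using hlen, ?_, ?_⟩
      · exact hw'.of_cons.cons (hammingGraph_adj_update_update huy hy c) |>.cons
          (hammingGraph_adj_update hc')
      · exact .trans _ _ _ (hhom.append_left [u]) (.rel _ _ hspider)
    · have hy' := eq_update_of_hammingGraph_adj huy hy
      refine ⟨y i, r, Ne.symm hy, rfl, ?_, ?_⟩
      · rwa [← hy']
      · rw [← hy']
        exact Relation.EqvGen.refl _

end Hamming

def IsGroundGenerated (d q : ℕ) [NeZero q] (l : List (Fin d → Fin q)) : Prop :=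
  ∃ ws : List (List (Fin d → Fin q)),
    (∀ w ∈ ws, ∃ i, IsGroundWalk d q i w ∨ IsGroundWalk d q i w.reverse) ∧
    Homotopic (hammingGraph d q) l (wprod 0 ws)

section Ground

variable {d q : ℕ} [NeZero q]

open Function

theorem head?_eq_of_isGroundWalk_or_reverse {i : Fin d} {w : List (Fin d → Fin q)}
    (h : IsGroundWalk d q i w ∨ IsGroundWalk d q i w.reverse) : w.head? = some 0 := by
  rcases h with ⟨a, b, -, -, -, rfl⟩ | ⟨a, b, -, -, -, h⟩
  · rfl
  · rw [← List.reverse_reverse w, h]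
    rfl

namespace IsGroundGenerated

theorem singleton_zero : IsGroundGenerated d q [0] :=
  ⟨[], by simp, .refl _⟩

theorem of_homotopic {l l' : List (Fin d → Fin q)} (h : Homotopic (hammingGraph d q) l l')
    (hl' : IsGroundGenerated d q l') : IsGroundGenerated d q l :=
  let ⟨ws, hws, hhom⟩ := hl'
  ⟨ws, hws, .trans _ _ _ h hhom⟩

theorem cons_cons_of_isGroundWalk {i : Fin d} {v w : Fin d → Fin q} {r : List (Fin d → Fin q)}
    (hU : IsGroundWalk d q i [0, v, w, 0]) (h : IsGroundGenerated d q (0 :: w :: r)) :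
    IsGroundGenerated d q (0 :: v :: w :: r) := by
  obtain ⟨ws, hws, hhom⟩ := h
  have hw0 : (hammingGraph d q).Adj w 0 := by
    obtain ⟨a, b, -, hb, -, h⟩ := hU
    obtain ⟨-, rfl⟩ : _ ∧ w = update (0 : Fin d → Fin q) i b := by simpa using h
    exact (hammingGraph_adj_update (by simpa using hb)).symm
  have hback : Homotopic (hammingGraph d q) (0 :: v :: w :: r) ([0, v, w] ++ 0 :: w :: r) :=
    .symm _ _ (.rel _ _ (.prune [0, v] r w 0 hw0))
  refine ⟨[0, v, w, 0] :: ws, ?_, hback.trans _ _ _ ?_⟩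
  · intro g hg
    rcases List.mem_cons.mp hg with rfl | hg
    · exact ⟨i, .inl hU⟩
    · exact hws g hg
  · rw [wprod, List.foldr_cons, ← wprod, show [0, v, w, 0] = [0, v, w] ++ [0] from rfl,
      wcat_append_singleton _ (head?_wprod fun g hg => ?_)]
    · exact hhom.append_left _
    · obtain ⟨j, hj⟩ := hws g hg
      exact head?_eq_of_isGroundWalk_or_reverse hj

theorem of_isWalkOn_cons_cons {v : Fin d → Fin q} {r : List (Fin d → Fin q)}
    (ih : ∀ l, l.length ≤ r.length + 1 → IsWalkOn (hammingGraph d q) 0 0 l →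
      IsGroundGenerated d q l)
    (hw : IsWalkOn (hammingGraph d q) 0 0 (0 :: v :: r)) : IsGroundGenerated d q (0 :: v :: r) := by
  obtain ⟨i, hi, -⟩ := hw.adj
  obtain ⟨a, rfl⟩ : ∃ a, v = update (0 : Fin d → Fin q) i a :=
    ⟨_, eq_update_of_hammingGraph_adj hw.adj hi⟩
  have ha : a ≠ 0 := by simpa [eq_comm] using hi
  obtain ⟨c, r', hc, hlen, hw', hhom⟩ := hw.of_cons.exists_homotopic_update_cons (i := i) hi
  simp only [update_idem, update_self] at hc hw' hhom
  refine of_homotopic (hhom.append_left [0]) ?_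
  by_cases hc0 : c = 0
  · have h0 : update (0 : Fin d → Fin q) i c = 0 := by simp [hc0]
    rw [h0] at hw' ⊢
    exact of_homotopic (.rel _ _ (.prune [] r' 0 _ hw.adj))
      (ih _ (by simp [← hlen]) hw'.of_cons)
  · refine cons_cons_of_isGroundWalk ⟨a, c, ha, hc0, Ne.symm hc, rfl⟩ (ih _ (by simp [← hlen]) ?_)
    exact hw'.of_cons.cons (hammingGraph_adj_update (by simpa using hc0))

end IsGroundGenerated

end Ground

theorem stmt15_general (d q : ℕ) [NeZero q]
    (l : List (Fin d → Fin q)) (hl : IsWalkOn (hammingGraph d q) 0 0 l) :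
    ∃ ws : List (List (Fin d → Fin q)),
      (∀ w ∈ ws, ∃ i, IsGroundWalk d q i w ∨ IsGroundWalk d q i w.reverse) ∧
      Homotopic (hammingGraph d q) l (wprod 0 ws) := by
  induction hn : l.length using Nat.strong_induction_on generalizing l with
  | _ n ih =>
  rcases l with _ | ⟨x, _ | ⟨v, r⟩⟩
  · simp [IsWalkOn] at hl
  · obtain rfl : x = 0 := by simpa using hl.2.1
    exact IsGroundGenerated.singleton_zero
  · obtain rfl : x = 0 := by simpa using hl.2.1
    refine IsGroundGenerated.of_isWalkOn_cons_cons (fun l hlen hl => ?_) hl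
    exact ih l.length (by simp only [List.length_cons] at hn; omega) l hl rfl

/-- every closed walk in `H(d,q)` (`q ≥ 3`) based at the all-zeros
vertex is ×-homotopic rel endpoints to a finite concatenation of ground walks and
their inverses: the ground walks generate the fundamental group. -/
theorem stmt15 (d q : ℕ) [NeZero q] (hq : 3 ≤ q)
    (l : List (Fin d → Fin q)) (hl : IsWalkOn (hammingGraph d q) 0 0 l) :
    ∃ ws : List (List (Fin d → Fin q)),
      (∀ w ∈ ws, ∃ i, IsGroundWalk d q i w ∨ IsGroundWalk d q i w.reverse) ∧
      Homotopic (hammingGraph d q) l (wprod 0 ws) :=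
  stmt15_general d q l hl
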